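/- Let ξ = ξ₁ + ξ₂ on ℝ^m where ξ₁ is differentiable and convex with L-Lipschitz continuous gradient and ξ₂ is strongly convex with modulus μ > 0, and let u* be the unique minimizer of ξ over the closed convex set U. Suppose the sequence {u^k} satisfies, for all k ≥ 1: u^k minimizes Q(u, û^{k−1}) = ξ₁(û^{k−1}) + ⟨∇ξ₁(û^{k−1}), u − û^{k−1}⟩ + (L_k/2)‖u − û^{k−1}‖² + ξ₂(u) over U, where û^{k−1} = u^{k−1} + ω_{k−1}(u^{k−1} − u^{k−2}) with 0 ≤ ω_{k−1} ≤ √(L_{k−1}/L_k) and 0 < L_k ≤ L; the descent condition ξ₁(u^k) ≤ ξ₁(û^{k−1}) + ⟨∇ξ₁(û^{k−1}), u^k − û^{k−1}⟩ + (L_k/2)‖u^k − û^{k−1}‖² holds; and ξ(u^k) ≤ ξ(u^{k−1}). Then {u^k} converges R-linearly to u*: there exist C > 0 and 0 < τ < 1 such that ‖u^k − u*‖ ≤ C τ^k for all k ≥ 0. -/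

import Mathlib

open scoped RealInnerProductSpace

/-- The subdifferential of `h` at `v`: the set of (global) subgradients. -/
def SubderivAt {m : ℕ} (h : EuclideanSpace ℝ (Fin m) → ℝ)
    (v : EuclideanSpace ℝ (Fin m)) : Set (EuclideanSpace ℝ (Fin m)) :=
  {g | ∀ z, h z ≥ h v + ⟪g, z - v⟫}

/-!
Write `F = ξ₁ + ξ₂`, `Δₖ = F(uᵏ) - F(u*)` and `pₖ = Lₖ/2 ‖uᵏ - uᵏ⁻¹‖²`. Since the model `Q(·, ûᵏ⁻¹)`
is `(Lₖ + μ)`-strongly convex and minimized at `uᵏ`, the descent condition and the gradient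
inequality give `F(uᵏ) + (Lₖ + μ)/2 ‖v - uᵏ‖² ≤ F(v) + Lₖ/2 ‖v - ûᵏ⁻¹‖²` for every `v ∈ U`.
With `v = uᵏ⁻¹` and `Lₖ ωₖ₋₁² ≤ Lₖ₋₁` this is a sufficient decrease of `Gₖ = Δₖ + pₖ`; with
`v = (1 - t) uᵏ⁻¹ + t u*`, `t = μ / (2L + μ)`, strong convexity of `F` gives
`Δₖ ≤ (1 - t) Δₖ₋₁ + 2 pₖ₋₁`. Together they contract `G` by a fixed factor over every two
steps, and `μ/2 ‖uᵏ - u*‖² ≤ Gₖ` by quadratic growth of `F` at its minimizer.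
-/

open Set Filter Topology

section Scalar

theorem two_step_contraction {Δ p : ℕ → ℝ} {ε t : ℝ} (hε : 0 < ε) (ht : t ≤ 1)
    (hp : ∀ n, 0 ≤ p n) (hdec : ∀ n, Δ (n + 1) + p (n + 1) + ε * p (n + 1) ≤ Δ n + p n)
    (hcontr : ∀ n, Δ (n + 1) ≤ (1 - t) * Δ n + 2 * p n) (n : ℕ) :
    Δ (n + 2) + p (n + 2) ≤ (3 + ε * (1 - t)) / (3 + ε) * (Δ n + p n) := by
  rw [div_mul_eq_mul_div, le_div_iff₀ (by linarith)]
  have hεt : 0 ≤ ε * (1 - t) := mul_nonneg hε.le (sub_nonneg.2 ht)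
  have h₀ := hdec n
  have h₁ := hdec (n + 1)
  have hp₁ := mul_nonneg hε.le (hp (n + 1))
  have hp₂ := mul_nonneg hε.le (hp (n + 2))
  nlinarith [mul_le_mul_of_nonneg_left (hcontr (n + 1)) hε.le, mul_nonneg hεt (hp (n + 1))]

theorem Antitone.le_div_mul_pow_of_two_step {G : ℕ → ℝ} {r : ℝ} (hG : Antitone G)
    (hr0 : 0 < r) (hr1 : r ≤ 1) (hG0 : 0 ≤ G 0) (hstep : ∀ n, G (n + 2) ≤ r ^ 2 * G n)
    (n : ℕ) : G n ≤ G 0 / r * r ^ n := by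
  have heven : ∀ j, G (2 * j) ≤ r ^ (2 * j) * G 0 := by
    intro j
    induction j with
    | zero => simp
    | succ j ih =>
      calc G (2 * (j + 1)) = G (2 * j + 2) := rfl
        _ ≤ r ^ 2 * G (2 * j) := hstep _
        _ ≤ r ^ 2 * (r ^ (2 * j) * G 0) := by gcongr
        _ = r ^ (2 * (j + 1)) * G 0 := by ring
  have hG0r : G 0 ≤ G 0 / r := le_div_self hG0 hr0 hr1
  obtain ⟨j, rfl | rfl⟩ := Nat.even_or_odd' n
  · calc G (2 * j) ≤ r ^ (2 * j) * G 0 := heven j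
      _ ≤ G 0 / r * r ^ (2 * j) := by rw [mul_comm]; gcongr
  · calc G (2 * j + 1) ≤ G (2 * j) := hG (Nat.le_succ _)
      _ ≤ r ^ (2 * j) * G 0 := heven j
      _ = G 0 / r * r ^ (2 * j + 1) := by field_simp; ring

theorem exists_le_mul_pow_of_mul_sq_le {d : ℕ → ℝ} {c K ρ : ℝ} (hc : 0 < c) (hρ0 : 0 < ρ)
    (hρ1 : ρ < 1) (h : ∀ n, c * d n ^ 2 ≤ K * ρ ^ n) :
    ∃ C > 0, ∃ τ : ℝ, 0 < τ ∧ τ < 1 ∧ ∀ n, d n ≤ C * τ ^ n := by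
  refine ⟨√(K / c) + 1, by positivity, √ρ, Real.sqrt_pos.2 hρ0,
    (Real.sqrt_lt' one_pos).2 (by simpa using hρ1), fun n => ?_⟩
  have hsq : d n ^ 2 ≤ (√(K / c) * √ρ ^ n) ^ 2 := by
    have hK : 0 ≤ K / c := div_nonneg (by nlinarith [h 0]) hc.le
    rw [mul_pow, Real.sq_sqrt hK, ← pow_mul, mul_comm n 2, pow_mul, Real.sq_sqrt hρ0.le,
      div_mul_eq_mul_div, le_div_iff₀ hc, mul_comm]
    exact h n
  calc d n ≤ |d n| := le_abs_self _
    _ ≤ √(K / c) * √ρ ^ n := abs_le_of_sq_le_sq hsq (by positivity)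
    _ ≤ (√(K / c) + 1) * √ρ ^ n := by gcongr; linarith

theorem exists_le_mul_pow_of_decrease_of_contraction {Δ p d : ℕ → ℝ} {ε t c : ℝ} (hε : 0 < ε)
    (ht0 : 0 < t) (ht1 : t ≤ 1) (hc : 0 < c) (hp : ∀ n, 0 ≤ p n)
    (hdec : ∀ n, Δ (n + 1) + p (n + 1) + ε * p (n + 1) ≤ Δ n + p n)
    (hcontr : ∀ n, Δ (n + 1) ≤ (1 - t) * Δ n + 2 * p n) (hd : ∀ n, c * d n ^ 2 ≤ Δ n) :
    ∃ C > 0, ∃ τ : ℝ, 0 < τ ∧ τ < 1 ∧ ∀ n, d n ≤ C * τ ^ n := by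
  set q := (3 + ε * (1 - t)) / (3 + ε)
  have hq0 : 0 < q := div_pos (by nlinarith) (by linarith)
  have hq1 : q < 1 := (div_lt_one (by linarith)).2 (by nlinarith [mul_pos hε ht0])
  have hG : Antitone fun n => Δ n + p n := antitone_nat_of_succ_le fun n => by
    nlinarith [hdec n, mul_nonneg hε.le (hp (n + 1))]
  have hGgeom := Antitone.le_div_mul_pow_of_two_step hG (Real.sqrt_pos.2 hq0)
    (Real.sqrt_le_one.2 hq1.le) (by nlinarith [hd 0, hp 0, mul_nonneg hc.le (sq_nonneg (d 0))])
    (fun n => by rw [Real.sq_sqrt hq0.le]; exact two_step_contraction hε ht1 hp hdec hcontr n)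
  exact exists_le_mul_pow_of_mul_sq_le hc (Real.sqrt_pos.2 hq0)
    ((Real.sqrt_lt' one_pos).2 (by simpa using hq1))
    fun n => (hd n).trans ((le_add_of_nonneg_right (hp n)).trans (hGgeom n))

end Scalar

section Euclidean

variable {m : ℕ}

theorem ConvexOn.subderivAt_nonempty {f : EuclideanSpace ℝ (Fin m) → ℝ}
    (hf : ConvexOn ℝ univ f) (v : EuclideanSpace ℝ (Fin m)) : (SubderivAt f v).Nonempty := by
  let E := EuclideanSpace ℝ (Fin m)
  -- separate `(v, f v)` from the open convex strict epigraph `S` of `f`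
  let S : Set (E × ℝ) := {p | f p.1 - p.2 < 0}
  have hSconv : Convex ℝ S := by
    simpa [S] using ((hf.comp_linearMap (LinearMap.fst ℝ E ℝ)).sub
      ((LinearMap.snd ℝ E ℝ).concaveOn convex_univ)).convex_lt 0
  have hSopen : IsOpen S :=
    isOpen_lt ((continuousOn_univ.1 (hf.continuousOn isOpen_univ)).comp continuous_fst
      |>.sub continuous_snd) continuous_const
  obtain ⟨φ, hφ⟩ := geometric_hahn_banach_open_point (x := (v, f v)) hSconv hSopen
    (by change ¬ f v - f v < 0; simp)
  set c := φ (0, 1)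
  have hφ_apply : ∀ z t, φ (z, t) = φ (z, 0) + t * c := by
    intro z t
    rw [← smul_eq_mul, ← map_smul, ← map_add]
    simp
  have hsep : ∀ z t, f z < t → φ (z, 0) + t * c < φ (v, 0) + f v * c := by
    intro z t hzt
    rw [← hφ_apply, ← hφ_apply]
    exact hφ _ (sub_neg.2 hzt)
  have hc : c < 0 := by
    have := hsep v (f v + 1) (lt_add_one _)
    linarith
  have hsupport : ∀ z, φ (z, 0) - φ (v, 0) ≤ -c * (f z - f v) := by
    intro z
    refine le_of_forall_pos_lt_add fun ε hε => ?_
    have := hsep z (f z + ε / -c) (lt_add_of_pos_right _ (div_pos hε (neg_pos.2 hc)))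
    have hcancel : ε / -c * c = -ε := by rw [div_neg, neg_mul, div_mul_cancel₀ _ hc.ne]
    linarith
  refine ⟨(-c)⁻¹ • (InnerProductSpace.toDual ℝ E).symm (φ.comp (.inl ℝ E ℝ)), fun z => ?_⟩
  rw [real_inner_smul_left, inner_sub_right, InnerProductSpace.toDual_symm_apply,
    InnerProductSpace.toDual_symm_apply]
  have := mul_le_mul_of_nonneg_left (hsupport z) (inv_nonneg.2 (neg_nonneg.2 hc.le))
  rw [← mul_assoc, inv_mul_cancel₀ (neg_ne_zero.2 hc.ne), one_mul] at this
  change f v + (-c)⁻¹ * (φ (z, 0) - φ (v, 0)) ≤ f z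
  linarith

theorem strongConvexOn_univ_of_subderivAt {f : EuclideanSpace ℝ (Fin m) → ℝ} {μ : ℝ}
    (hf : ConvexOn ℝ univ f)
    (hsc : ∀ u v g, g ∈ SubderivAt f v → f u - f v ≥ ⟪g, u - v⟫ + μ / 2 * ‖u - v‖ ^ 2) :
    StrongConvexOn univ μ f := by
  refine ⟨convex_univ, fun x _ y _ a b ha hb hab => ?_⟩
  obtain ⟨g, hg⟩ := hf.subderivAt_nonempty (a • x + b • y)
  obtain rfl : a = 1 - b := eq_sub_of_add_eq hab
  have hx := hsc x _ g hg
  have hy := hsc y _ g hg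
  rw [show x - ((1 - b) • x + b • y) = b • (x - y) by module, inner_smul_right, norm_smul,
    Real.norm_eq_abs, mul_pow, sq_abs] at hx
  rw [show y - ((1 - b) • x + b • y) = (b - 1) • (x - y) by module, inner_smul_right, norm_smul,
    Real.norm_eq_abs, mul_pow, sq_abs] at hy
  simp only [smul_eq_mul]
  nlinarith [mul_le_mul_of_nonneg_left hx ha, mul_le_mul_of_nonneg_left hy hb]

end Euclidean

section InnerProductSpace

variable {E : Type*} [NormedAddCommGroup E] [InnerProductSpace ℝ E]

theorem StrongConvexOn.subset {f : E → ℝ} {s t : Set E} {m : ℝ} (hf : StrongConvexOn t m f)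
    (hst : s ⊆ t) (hs : Convex ℝ s) : StrongConvexOn s m f :=
  ⟨hs, fun _ hx _ hy => hf.2 (hst hx) (hst hy)⟩

theorem StrongConvexOn.add_sq_norm_le_of_isMinOn {f : E → ℝ} {s : Set E} {m : ℝ} {x y : E}
    (hf : StrongConvexOn s m f) (hmin : IsMinOn f s x) (hx : x ∈ s) (hy : y ∈ s) :
    f x + m / 2 * ‖y - x‖ ^ 2 ≤ f y := by
  have hsegment : ∀ t ∈ Ioo (0 : ℝ) 1, f x + (1 - t) * (m / 2 * ‖y - x‖ ^ 2) ≤ f y := by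
    rintro t ⟨ht0, ht1⟩
    have hconv := hf.2 hx hy (sub_nonneg.2 ht1.le) ht0.le (sub_add_cancel 1 t)
    have hle : f x ≤ f ((1 - t) • x + t • y) :=
      hmin (hf.1 hx hy (sub_nonneg.2 ht1.le) ht0.le (sub_add_cancel 1 t))
    simp only [smul_eq_mul, norm_sub_rev x y] at hconv
    have : t * (f x + (1 - t) * (m / 2 * ‖y - x‖ ^ 2)) ≤ t * f y := by linarith
    exact le_of_mul_le_mul_left this ht0
  have hlim : Tendsto (fun t : ℝ => f x + (1 - t) * (m / 2 * ‖y - x‖ ^ 2)) (𝓝[>] 0)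
      (𝓝 (f x + (1 - 0) * (m / 2 * ‖y - x‖ ^ 2))) :=
    ((continuous_const.add ((continuous_const.sub continuous_id).mul continuous_const)).tendsto
      0).mono_left nhdsWithin_le_nhds
  simpa using le_of_tendsto hlim (eventually_of_mem (Ioo_mem_nhdsGT one_pos) hsegment)

theorem ConvexOn.add_inner_le_of_hasGradientAt [CompleteSpace E] {f : E → ℝ} {s : Set E}
    {g x y : E} (hf : ConvexOn ℝ s f) (hx : x ∈ s) (hy : y ∈ s) (hg : HasGradientAt f g x) :
    f x + ⟪g, y - x⟫ ≤ f y := by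
  have hline : ConvexOn ℝ (AffineMap.lineMap x y ⁻¹' s) (f ∘ AffineMap.lineMap (k := ℝ) x y) :=
    hf.comp_affineMap _
  have hderiv : HasDerivAt (f ∘ AffineMap.lineMap x y) ⟪g, y - x⟫ (0 : ℝ) := by
    have hg' : HasFDerivAt f (InnerProductSpace.toDual ℝ E g) (AffineMap.lineMap x y (0 : ℝ)) := by
      simpa using hg.hasFDerivAt
    simpa using hg'.comp_hasDerivAt (0 : ℝ) AffineMap.hasDerivAt_lineMap
  have := hline.le_slope_of_hasDerivAt (by simpa using hx) (by simpa using hy) one_pos hderiv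
  simp only [slope_def_field, Function.comp_apply, AffineMap.lineMap_apply_one,
    AffineMap.lineMap_apply_zero, sub_zero, div_one] at this
  linarith

/-- The model `Q(·, y)` minimized in one step of the method, with `g = ∇f(y)`. -/
noncomputable def proxGradModel (f h : E → ℝ) (g y : E) (L : ℝ) (v : E) : ℝ :=
  f y + ⟪g, v - y⟫ + L / 2 * ‖v - y‖ ^ 2 + h v

theorem StrongConvexOn.proxGradModel {h : E → ℝ} {s : Set E} {μ : ℝ} (hh : StrongConvexOn s μ h)
    (f : E → ℝ) (g y : E) (L : ℝ) : StrongConvexOn s (L + μ) (proxGradModel f h g y L) := by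
  rw [strongConvexOn_iff_convex] at hh ⊢
  have hconv : ConvexOn ℝ s fun v =>
      ⟪g - L • y, v⟫ + (h v - μ / 2 * ‖v‖ ^ 2) + (f y - ⟪g, y⟫ + L / 2 * ‖y‖ ^ 2) :=
    (((innerSL ℝ (g - L • y)).toLinearMap.convexOn hh.1).add hh).add_const _
  refine hconv.congr fun v _ => ?_
  simp only [_root_.proxGradModel, norm_sub_sq_real, inner_sub_left, inner_sub_right,
    real_inner_smul_left, real_inner_comm v y]
  ring

theorem proxGrad_fundamental_inequality [CompleteSpace E] {f h : E → ℝ} {s : Set E}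
    {g y x v : E} {L μ : ℝ} (hf : ConvexOn ℝ univ f) (hg : HasGradientAt f g y)
    (hh : StrongConvexOn s μ h) (hmin : IsMinOn (proxGradModel f h g y L) s x) (hx : x ∈ s)
    (hdesc : f x ≤ f y + ⟪g, x - y⟫ + L / 2 * ‖x - y‖ ^ 2) (hv : v ∈ s) :
    f x + h x + (L + μ) / 2 * ‖v - x‖ ^ 2 ≤ f v + h v + L / 2 * ‖v - y‖ ^ 2 := by
  have hgrowth := (hh.proxGradModel f g y L).add_sq_norm_le_of_isMinOn hmin hx hv
  have hgrad := hf.add_inner_le_of_hasGradientAt (mem_univ y) (mem_univ v) hg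
  simp only [proxGradModel] at hgrowth
  linarith

section OneStep

variable {F : E → ℝ} {s : Set E} {μ a₁ a₂ ω : ℝ} {x₀ x₁ x₂ y₁ : E}

theorem proxGrad_sufficient_decrease
    (hfund : ∀ v ∈ s, F x₂ + (a₂ + μ) / 2 * ‖v - x₂‖ ^ 2 ≤ F v + a₂ / 2 * ‖v - y₁‖ ^ 2)
    (hy : y₁ = x₁ + ω • (x₁ - x₀)) (hω : a₂ * ω ^ 2 ≤ a₁) (hx₁ : x₁ ∈ s) :
    F x₂ + (a₂ + μ) / 2 * ‖x₂ - x₁‖ ^ 2 ≤ F x₁ + a₁ / 2 * ‖x₁ - x₀‖ ^ 2 := by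
  have h := hfund x₁ hx₁
  rw [hy, sub_add_cancel_left, norm_neg, norm_smul, Real.norm_eq_abs, mul_pow, sq_abs,
    norm_sub_rev x₁ x₂] at h
  nlinarith [mul_le_mul_of_nonneg_right hω (sq_nonneg ‖x₁ - x₀‖)]

theorem proxGrad_contraction {z : E} {t : ℝ} (hF : StrongConvexOn s μ F)
    (hfund : ∀ v ∈ s, F x₂ + (a₂ + μ) / 2 * ‖v - x₂‖ ^ 2 ≤ F v + a₂ / 2 * ‖v - y₁‖ ^ 2)
    (hy : y₁ = x₁ + ω • (x₁ - x₀)) (hω : a₂ * ω ^ 2 ≤ a₁) (hx₁ : x₁ ∈ s) (hz : z ∈ s)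
    (ha₂ : 0 ≤ a₂) (hμ : 0 ≤ μ) (ht0 : 0 ≤ t) (ht1 : t ≤ 1) (ht : 2 * a₂ * t ≤ μ * (1 - t)) :
    F x₂ - F z ≤ (1 - t) * (F x₁ - F z) + a₁ * ‖x₁ - x₀‖ ^ 2 := by
  set v := (1 - t) • x₁ + t • z
  have hv : v ∈ s := hF.1 hx₁ hz (sub_nonneg.2 ht1) ht0 (sub_add_cancel 1 t)
  have hFv : F v ≤ (1 - t) * F x₁ + t * F z - (1 - t) * t * (μ / 2 * ‖x₁ - z‖ ^ 2) :=
    hF.2 hx₁ hz (sub_nonneg.2 ht1) ht0 (sub_add_cancel 1 t)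
  have hvy : ‖v - y₁‖ ^ 2 ≤ 2 * (t ^ 2 * ‖x₁ - z‖ ^ 2 + ω ^ 2 * ‖x₁ - x₀‖ ^ 2) := by
    rw [show v - y₁ = t • (z - x₁) - ω • (x₁ - x₀) by rw [hy]; module]
    calc ‖t • (z - x₁) - ω • (x₁ - x₀)‖ ^ 2
        ≤ (‖t • (z - x₁)‖ + ‖ω • (x₁ - x₀)‖) ^ 2 := by gcongr; exact norm_sub_le _ _
      _ ≤ 2 * (‖t • (z - x₁)‖ ^ 2 + ‖ω • (x₁ - x₀)‖ ^ 2) := add_sq_le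
      _ = 2 * (t ^ 2 * ‖x₁ - z‖ ^ 2 + ω ^ 2 * ‖x₁ - x₀‖ ^ 2) := by
        simp only [norm_smul, mul_pow, Real.norm_eq_abs, sq_abs, norm_sub_rev z x₁]
  have hstep :
      a₂ / 2 * ‖v - y₁‖ ^ 2 ≤ (1 - t) * t * (μ / 2 * ‖x₁ - z‖ ^ 2) + a₁ * ‖x₁ - x₀‖ ^ 2 := by
    nlinarith [mul_le_mul_of_nonneg_left hvy ha₂, mul_le_mul_of_nonneg_right ht
      (mul_nonneg ht0 (sq_nonneg ‖x₁ - z‖)), mul_le_mul_of_nonneg_right hω (sq_nonneg ‖x₁ - x₀‖)]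
  nlinarith [hfund v hv, mul_nonneg (add_nonneg ha₂ hμ) (sq_nonneg ‖v - x₂‖)]

end OneStep

theorem proxGrad_extrapolation_rLinear {F : E → ℝ} {s : Set E} {μ L : ℝ} {z : E}
    {u uhat : ℕ → E} {Lk ω : ℕ → ℝ} (hμ : 0 < μ) (hF : StrongConvexOn s μ F) (hz : z ∈ s)
    (hmin : IsMinOn F s z) (hu : ∀ n, u n ∈ s) (hLk : ∀ n, 0 < Lk n ∧ Lk n ≤ L)
    (hω : ∀ n, Lk (n + 1) * ω n ^ 2 ≤ Lk n)
    (huhat : ∀ n, uhat n = u n + ω n • (u n - u (n - 1)))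
    (hfund : ∀ n, ∀ v ∈ s, F (u (n + 1)) + (Lk (n + 1) + μ) / 2 * ‖v - u (n + 1)‖ ^ 2 ≤
      F v + Lk (n + 1) / 2 * ‖v - uhat n‖ ^ 2) :
    ∃ C > 0, ∃ τ : ℝ, 0 < τ ∧ τ < 1 ∧ ∀ n, ‖u n - z‖ ≤ C * τ ^ n := by
  have hL : 0 < L := (hLk 0).1.trans_le (hLk 0).2
  set Δ : ℕ → ℝ := fun n => F (u n) - F z
  set p : ℕ → ℝ := fun n => Lk n / 2 * ‖u n - u (n - 1)‖ ^ 2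
  have hp : ∀ n, 0 ≤ p n := fun n => by have := (hLk n).1; positivity
  set ε := μ / L
  have hε : 0 < ε := div_pos hμ hL
  set t := μ / (2 * L + μ) with ht_def
  have ht0 : 0 < t := by positivity
  have ht1 : t ≤ 1 := div_le_one_of_le₀ (by linarith) (by positivity)
  have hLt : 2 * L * t = μ * (1 - t) := by rw [ht_def]; field_simp; ring
  have hdec : ∀ n, Δ (n + 1) + p (n + 1) + ε * p (n + 1) ≤ Δ n + p n := by
    intro n
    have h := proxGrad_sufficient_decrease (hfund n) (huhat n) (hω n) (hu n)
    have hεLk : ε * Lk (n + 1) ≤ μ := by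
      rw [div_mul_eq_mul_div, div_le_iff₀ hL]; exact mul_le_mul_of_nonneg_left (hLk _).2 hμ.le
    simp only [Δ, p, Nat.add_sub_cancel]
    nlinarith [mul_le_mul_of_nonneg_right hεLk (sq_nonneg ‖u (n + 1) - u n‖)]
  have hcontr : ∀ n, Δ (n + 1) ≤ (1 - t) * Δ n + 2 * p n := by
    intro n
    have h := proxGrad_contraction hF (hfund n) (huhat n) (hω n) (hu n) hz (hLk _).1.le hμ.le
      ht0.le ht1 (hLt ▸ by gcongr; exact (hLk _).2)
    simp only [Δ, p]
    linarith
  refine exists_le_mul_pow_of_decrease_of_contraction hε ht0 ht1 (half_pos hμ) hp hdec hcontr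
    fun n => ?_
  have := hF.add_sq_norm_le_of_isMinOn hmin hz (hu n)
  simp only [Δ]
  linarith

end InnerProductSpace

-- `u^{-1} = u^0` is realized by truncated subtraction: `u (1 - 2) = u 0`.
theorem pg_R_linear_convergence_general (m : ℕ)
    (ξ₁ ξ₂ : EuclideanSpace ℝ (Fin m) → ℝ)
    (gradξ₁ : EuclideanSpace ℝ (Fin m) → EuclideanSpace ℝ (Fin m))
    (L : ℝ)
    (hξ₁conv : ConvexOn ℝ Set.univ ξ₁)
    (hξ₁diff : ∀ u, HasGradientAt ξ₁ (gradξ₁ u) u)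
    (μ : ℝ) (hμ : 0 < μ)
    (hξ₂conv : ConvexOn ℝ Set.univ ξ₂)
    (hξ₂sc : ∀ u v g, g ∈ SubderivAt ξ₂ v →
      ξ₂ u - ξ₂ v ≥ ⟪g, u - v⟫ + μ / 2 * ‖u - v‖ ^ 2)
    (Uset : Set (EuclideanSpace ℝ (Fin m))) (hUconv : Convex ℝ Uset)
    (ustar : EuclideanSpace ℝ (Fin m)) (hstar : ustar ∈ Uset)
    (hstarmin : ∀ v ∈ Uset, ξ₁ ustar + ξ₂ ustar ≤ ξ₁ v + ξ₂ v)
    (u : ℕ → EuclideanSpace ℝ (Fin m))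
    (Lk : ℕ → ℝ) (ω : ℕ → ℝ)
    (uhat : ℕ → EuclideanSpace ℝ (Fin m))
    (hu0 : u 0 ∈ Uset)
    (hLk : ∀ k, 0 < Lk k ∧ Lk k ≤ L)
    (hω : ∀ k : ℕ, 1 ≤ k → 0 ≤ ω (k - 1) ∧ ω (k - 1) ≤ Real.sqrt (Lk (k - 1) / Lk k))
    (huhat : ∀ k : ℕ, 1 ≤ k → uhat (k - 1) = u (k - 1) + ω (k - 1) • (u (k - 1) - u (k - 2)))
    (hmem : ∀ k : ℕ, 1 ≤ k → u k ∈ Uset)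
    (hmin : ∀ k : ℕ, 1 ≤ k → ∀ v ∈ Uset,
      ξ₁ (uhat (k - 1)) + ⟪gradξ₁ (uhat (k - 1)), u k - uhat (k - 1)⟫ +
          Lk k / 2 * ‖u k - uhat (k - 1)‖ ^ 2 + ξ₂ (u k) ≤
        ξ₁ (uhat (k - 1)) + ⟪gradξ₁ (uhat (k - 1)), v - uhat (k - 1)⟫ +
          Lk k / 2 * ‖v - uhat (k - 1)‖ ^ 2 + ξ₂ v)
    (hdesc : ∀ k : ℕ, 1 ≤ k →
      ξ₁ (u k) ≤ ξ₁ (uhat (k - 1)) + ⟪gradξ₁ (uhat (k - 1)), u k - uhat (k - 1)⟫ +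
        Lk k / 2 * ‖u k - uhat (k - 1)‖ ^ 2) :
    ∃ C > 0, ∃ τ : ℝ, 0 < τ ∧ τ < 1 ∧ ∀ k : ℕ, ‖u k - ustar‖ ≤ C * τ ^ k := by
  have hu : ∀ k, u k ∈ Uset
    | 0 => hu0
    | k + 1 => hmem (k + 1) k.succ_pos
  have hξ₂U : StrongConvexOn Uset μ ξ₂ :=
    (strongConvexOn_univ_of_subderivAt hξ₂conv hξ₂sc).subset (subset_univ _) hUconv
  have hFU : StrongConvexOn Uset μ (ξ₁ + ξ₂) := by
    have h := (uniformConvexOn_zero.2 (hξ₁conv.subset (subset_univ _) hUconv)).add hξ₂U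
    rwa [zero_add] at h
  refine proxGrad_extrapolation_rLinear (uhat := uhat) (ω := ω) hμ hFU hstar
    (isMinOn_iff.2 hstarmin) hu hLk (fun n => ?_) (fun n => ?_) (fun n v hv => ?_)
  · obtain ⟨hω0, hω1⟩ := hω (n + 1) n.succ_pos
    simp only [Nat.add_sub_cancel] at hω0 hω1
    have hωsq : ω n ^ 2 ≤ Lk n / Lk (n + 1) :=
      (Real.le_sqrt hω0 (div_pos (hLk n).1 (hLk (n + 1)).1).le).1 hω1
    linarith [(le_div_iff₀ (hLk (n + 1)).1).1 hωsq]
  · simpa [show n + 1 - 2 = n - 1 by omega] using huhat (n + 1) n.succ_pos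
  · exact proxGrad_fundamental_inequality hξ₁conv (hξ₁diff _) hξ₂U
      (isMinOn_iff.2 (by simpa [proxGradModel] using hmin (n + 1) n.succ_pos)) (hu _)
      (by simpa using hdesc (n + 1) n.succ_pos) hv

/-- R-linear convergence of the proximal gradient method with
extrapolation under strong convexity.  The sequence is indexed by `ℕ` with the
convention `u^{-1} = u^0` (realized by truncated subtraction: `1 - 2 = 0`). -/
theorem pg_R_linear_convergence (m : ℕ)
    (ξ₁ ξ₂ : EuclideanSpace ℝ (Fin m) → ℝ)
    (gradξ₁ : EuclideanSpace ℝ (Fin m) → EuclideanSpace ℝ (Fin m))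
    (L : ℝ) (hL : 0 < L)
    (hξ₁conv : ConvexOn ℝ Set.univ ξ₁)
    (hξ₁diff : ∀ u, HasGradientAt ξ₁ (gradξ₁ u) u)
    (hξ₁lip : ∀ u v, ‖gradξ₁ u - gradξ₁ v‖ ≤ L * ‖u - v‖)
    (μ : ℝ) (hμ : 0 < μ)
    (hξ₂conv : ConvexOn ℝ Set.univ ξ₂)
    (hξ₂sc : ∀ u v g, g ∈ SubderivAt ξ₂ v →
      ξ₂ u - ξ₂ v ≥ ⟪g, u - v⟫ + μ / 2 * ‖u - v‖ ^ 2)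
    (Uset : Set (EuclideanSpace ℝ (Fin m))) (hUconv : Convex ℝ Uset)
    (hUclosed : IsClosed Uset)
    (ustar : EuclideanSpace ℝ (Fin m)) (hstar : ustar ∈ Uset)
    (hstarmin : ∀ v ∈ Uset, ξ₁ ustar + ξ₂ ustar ≤ ξ₁ v + ξ₂ v)
    (u : ℕ → EuclideanSpace ℝ (Fin m))
    (Lk : ℕ → ℝ) (ω : ℕ → ℝ)
    (uhat : ℕ → EuclideanSpace ℝ (Fin m))
    (hu0 : u 0 ∈ Uset)
    (hLk : ∀ k, 0 < Lk k ∧ Lk k ≤ L)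
    (hω : ∀ k : ℕ, 1 ≤ k → 0 ≤ ω (k - 1) ∧ ω (k - 1) ≤ Real.sqrt (Lk (k - 1) / Lk k))
    (huhat : ∀ k : ℕ, 1 ≤ k → uhat (k - 1) = u (k - 1) + ω (k - 1) • (u (k - 1) - u (k - 2)))
    (hmem : ∀ k : ℕ, 1 ≤ k → u k ∈ Uset)
    (hmin : ∀ k : ℕ, 1 ≤ k → ∀ v ∈ Uset,
      ξ₁ (uhat (k - 1)) + ⟪gradξ₁ (uhat (k - 1)), u k - uhat (k - 1)⟫ +
          Lk k / 2 * ‖u k - uhat (k - 1)‖ ^ 2 + ξ₂ (u k) ≤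
        ξ₁ (uhat (k - 1)) + ⟪gradξ₁ (uhat (k - 1)), v - uhat (k - 1)⟫ +
          Lk k / 2 * ‖v - uhat (k - 1)‖ ^ 2 + ξ₂ v)
    (hdesc : ∀ k : ℕ, 1 ≤ k →
      ξ₁ (u k) ≤ ξ₁ (uhat (k - 1)) + ⟪gradξ₁ (uhat (k - 1)), u k - uhat (k - 1)⟫ +
        Lk k / 2 * ‖u k - uhat (k - 1)‖ ^ 2)
    (hmono : ∀ k : ℕ, 1 ≤ k → ξ₁ (u k) + ξ₂ (u k) ≤ ξ₁ (u (k - 1)) + ξ₂ (u (k - 1))) :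
    ∃ C > 0, ∃ τ : ℝ, 0 < τ ∧ τ < 1 ∧ ∀ k : ℕ, ‖u k - ustar‖ ≤ C * τ ^ k :=
  pg_R_linear_convergence_general m ξ₁ ξ₂ gradξ₁ L hξ₁conv hξ₁diff μ hμ hξ₂conv hξ₂sc Uset hUconv
    ustar hstar hstarmin u Lk ω uhat hu0 hLk hω huhat hmem hmin hdesc
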